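/- arXiv:0904.3251 — 6 statements merged into one kernel-verified Lean document; each statement's English description precedes it below -/
import Mathlib

section
/- (Ryser's formula for rectangular matrices) Let A = (a_{ij}) be an m×n matrix over a commutative ring with m ≤ n. For X ⊆ {1,...,n} let a_{iX} = Σ_{j ∈ X} a_{ij}. Then per A = Σ_{X ⊆ {1,...,n}, |X| ≤ m} (−1)^{m−|X|} · C(n−|X|, m−|X|) · a_{1X} a_{2X} ⋯ a_{mX}, where C(·,·) is the binomial coefficient. -/
/-!
Expanding each product `∏ i, ∑ j ∈ X, A i j` writes the right-hand side as a sum of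
`∏ i, A i (g i)` over maps `g`, with coefficient the sum of
`(-1) ^ (m - #X) * C(n - #X, m - #X)` over the sets `X ⊇ im g` with `#X ≤ m`. The binomial
counts the `m`-sets `Z ⊇ X`, so swapping the two summations leaves, for each `m`-set
`Z ⊇ im g`, the alternating sum `∑_{im g ⊆ X ⊆ Z} (-1) ^ #(Z \ X)`, which vanishes unless
`im g = Z`. Hence the coefficient of `g` is `1` if `#(im g) = m`, i.e. `g` is injective,
and `0` otherwise.
-/

open Finset

section

variable {α : Type*} [DecidableEq α]

theorem sum_Icc_neg_one_pow_card_sub {R : Type*} [CommRing R] {s t : Finset α} (h : s ⊆ t) :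
    ∑ u ∈ Icc s t, (-1 : R) ^ (#t - #u) = if s = t then 1 else 0 := by
  have reindex : ∑ u ∈ Icc s t, (-1 : R) ^ (#t - #u) = ∑ v ∈ (t \ s).powerset, (-1 : R) ^ #v := by
    refine sum_nbij' (t \ ·) (t \ ·) ?_ ?_ ?_ ?_ ?_ <;> simp only [mem_Icc, mem_powerset]
    all_goals grind
  have alternating := congrArg (Int.cast : ℤ → R) (sum_powerset_neg_one_pow_card (x := t \ s))
  push_cast at alternating
  rw [reindex, alternating]
  exact if_congr (sdiff_eq_empty_iff_subset.trans ⟨subset_antisymm h, fun e => e ▸ subset_rfl⟩)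
    rfl rfl

theorem card_filter_superset_card_eq [Fintype α] (s : Finset α) {k : ℕ} (hk : #s ≤ k) :
    #{t : Finset α | s ⊆ t ∧ #t = k} = (Fintype.card α - #s).choose (k - #s) := by
  rw [← card_compl, ← card_powersetCard]
  refine card_nbij' (· \ s) (s ∪ ·) ?_ ?_ ?_ ?_ <;> intro x hx <;>
    simp only [coe_filter, mem_univ, true_and, Set.mem_ofPred_eq, mem_coe, mem_powersetCard,
      subset_compl_iff_disjoint_left] at hx ⊢
  · exact ⟨disjoint_sdiff_self_right, by rw [card_sdiff_of_subset hx.1, hx.2]⟩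
  · exact ⟨subset_union_left, by rw [card_union_of_disjoint hx.1, hx.2]; omega⟩
  · exact union_sdiff_of_subset hx.1
  · exact union_sdiff_cancel_left hx.1

theorem sum_superset_neg_one_pow_mul_choose [Fintype α] {R : Type*} [CommRing R] (m : ℕ)
    (s : Finset α) :
    ∑ X ∈ {X : Finset α | s ⊆ X ∧ #X ≤ m},
        (-1 : R) ^ (m - #X) * ((Fintype.card α - #X).choose (m - #X) : R) =
      if #s = m then 1 else 0 := by
  calc _ = ∑ X ∈ {X : Finset α | s ⊆ X ∧ #X ≤ m}, ∑ Z ∈ {Z : Finset α | X ⊆ Z ∧ #Z = m},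
          (-1 : R) ^ (#Z - #X) := by
        refine sum_congr rfl fun X hX => ?_
        rw [sum_congr rfl fun Z hZ => by rw [(mem_filter.1 hZ).2.2], sum_const,
          card_filter_superset_card_eq X (mem_filter.1 hX).2.2, nsmul_eq_mul, mul_comm]
    _ = ∑ Z ∈ {Z : Finset α | s ⊆ Z ∧ #Z = m}, ∑ X ∈ Icc s Z, (-1 : R) ^ (#Z - #X) := by
        refine sum_comm' fun X Z => ?_
        simp only [mem_filter, mem_univ, true_and, mem_Icc]
        constructor
        · rintro ⟨⟨hsX, -⟩, hXZ, hZ⟩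
          exact ⟨⟨hsX, hXZ⟩, hsX.trans hXZ, hZ⟩
        · rintro ⟨⟨hsX, hXZ⟩, -, hZ⟩
          exact ⟨⟨hsX, hZ ▸ card_le_card hXZ⟩, hXZ, hZ⟩
    _ = ∑ Z ∈ {Z : Finset α | s ⊆ Z ∧ #Z = m}, if s = Z then 1 else 0 :=
        sum_congr rfl fun Z hZ => sum_Icc_neg_one_pow_card_sub (mem_filter.1 hZ).2.1
    _ = if #s = m then 1 else 0 := by
        rw [sum_ite_eq]
        simp

end

theorem ryser_rectangular_general {m n : ℕ} {R : Type*} [CommRing R]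
    (A : Fin m → Fin n → R) :
    (∑ σ ∈ Finset.univ.filter (fun σ : Fin m → Fin n => Function.Injective σ),
        ∏ i, A i (σ i)) =
      ∑ X ∈ (Finset.univ : Finset (Fin n)).powerset.filter (fun X => X.card ≤ m),
        (-1 : R) ^ (m - X.card) * ((n - X.card).choose (m - X.card) : R) *
          ∏ i, ∑ j ∈ X, A i j := by
  simp_rw [prod_univ_sum, mul_sum]
  rw [sum_comm' (t' := univ) (s' := fun g => {X | univ.image g ⊆ X ∧ #X ≤ m}) ?_]
  · have coeff := fun g : Fin m → Fin n =>
      sum_superset_neg_one_pow_mul_choose (R := R) m (univ.image g)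
    simp only [Fintype.card_fin] at coeff
    simp_rw [← sum_mul, coeff, ite_mul, one_mul, zero_mul, ← sum_filter]
    refine sum_congr (filter_congr fun g _ => ?_) fun _ _ => rfl
    simpa [Set.injOn_univ] using (card_image_iff (s := univ) (f := g)).symm
  · intro X g
    simp [image_subset_iff, and_comm]

/-- Ryser's formula for rectangular matrices over a commutative ring. -/
theorem ryser_rectangular {m n : ℕ} {R : Type*} [CommRing R] (hmn : m ≤ n)
    (A : Fin m → Fin n → R) :
    (∑ σ ∈ Finset.univ.filter (fun σ : Fin m → Fin n => Function.Injective σ),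
        ∏ i, A i (σ i)) =
      ∑ X ∈ (Finset.univ : Finset (Fin n)).powerset.filter (fun X => X.card ≤ m),
        (-1 : R) ^ (m - X.card) * ((n - X.card).choose (m - X.card) : R) *
          ∏ i, ∑ j ∈ X, A i j :=
  ryser_rectangular_general A
end

section
/- (Transposed Ryser formula) Let A = (a_{ij}) be an m×n matrix over a commutative ring with m ≤ n. For X ⊆ {1,...,m} let a_{Xj} = Σ_{i ∈ X} a_{ij}. Then per A = Σ_{X ⊆ {1,...,m}} (−1)^{m−|X|} Σ_p a_{X1}^{p_1} a_{X2}^{p_2} ⋯ a_{Xn}^{p_n}, where the inner sum is over all binary sequences p = p_1 p_2 ⋯ p_n ∈ {0,1}^n with p_1 + p_2 + ⋯ + p_n = m. -/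
/-!
Read a binary sequence `p` together with a choice of a row `i ∈ X` for every column `j` with
`p j = 1` as a partial map `g : Fin n → Option (Fin m)` from columns to rows. Expanding the
products, the inner sum for `X` becomes the sum, over partial maps with `m` columns in their
domain, of `∏ a_{g(j) j}` times the indicator that the range of `g` lies in `X`. The alternating
sum over `X` then keeps exactly the partial maps onto all `m` rows; with a domain of size `m`
these are the partial inverses of the injections `Fin m → Fin n`, so what remains is the
permanent.
-/

open Finset Function

section PartialMaps

variable {ι κ R : Type*}

def isSomeBit (o : Option κ) : Fin 2 := if o.isSome then 1 else 0

theorem Function.IsPartialInv.eq_partialInv {α β : Type*} {f : α → β} {g : β → Option α}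
    (h : IsPartialInv f g) : g = partialInv f :=
  funext fun y => Option.ext fun x => (h x y).trans (h.injective.isPartialInv x y).symm

variable [Fintype ι]

def partialDom (g : ι → Option κ) : Finset ι := univ.filter fun j => (g j).isSome

lemma sum_isSomeBit_eq_card_partialDom (g : ι → Option κ) :
    ∑ j, (isSomeBit (g j) : ℕ) = #(partialDom g) := by
  rw [partialDom, card_filter]
  exact sum_congr rfl fun j _ => by unfold isSomeBit; split <;> rfl

variable [Fintype κ]

def partialRange [DecidableEq κ] (g : ι → Option κ) : Finset κ :=
  univ.filter fun i => ∃ j, g j = some i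

lemma sum_filter_isSomeBit_eq_pow [CommSemiring R] (y : κ → R) (b : Fin 2) :
    ∑ o ∈ univ.filter (fun o : Option κ => isSomeBit o = b), o.elim 1 y =
      (∑ i, y i) ^ (b : ℕ) := by
  rw [sum_filter, Fintype.sum_option]
  fin_cases b <;> simp [isSomeBit]

lemma prod_pow_eq_sum_filter_isSomeBit [CommSemiring R] [DecidableEq ι] (v : ι → κ → R)
    (p : ι → Fin 2) :
    ∏ j, (∑ i, v j i) ^ (p j : ℕ) =
      ∑ g ∈ univ.filter (fun g : ι → Option κ => (fun j => isSomeBit (g j)) = p),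
        ∏ j, (g j).elim 1 (v j) := by
  have hpi : univ.filter (fun g : ι → Option κ => (fun j => isSomeBit (g j)) = p) =
      Fintype.piFinset fun j => univ.filter (isSomeBit · = p j) := by
    ext g; simp [funext_iff]
  rw [hpi, ← prod_univ_sum _ fun j (o : Option κ) => o.elim 1 (v j)]
  exact prod_congr rfl fun j _ => (sum_filter_isSomeBit_eq_pow (v j) (p j)).symm

lemma sum_prod_pow_eq_sum_partialDom [CommSemiring R] [DecidableEq ι] (v : ι → κ → R)
    (m : ℕ) :
    ∑ p ∈ univ.filter (fun p : ι → Fin 2 => ∑ j, (p j : ℕ) = m),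
        ∏ j, (∑ i, v j i) ^ (p j : ℕ) =
      ∑ g ∈ univ.filter (fun g : ι → Option κ => #(partialDom g) = m),
        ∏ j, (g j).elim 1 (v j) := by
  simp_rw [prod_pow_eq_sum_filter_isSomeBit, sum_fiberwise_eq_sum_filter, mem_filter,
    mem_univ, true_and, sum_isSomeBit_eq_card_partialDom]

lemma prod_elim_ite_mem [DecidableEq κ] [CommMonoidWithZero R] (v : ι → κ → R)
    (X : Finset κ) (g : ι → Option κ) :
    ∏ j, (g j).elim 1 (fun i => if i ∈ X then v j i else 0) =
      if partialRange g ⊆ X then ∏ j, (g j).elim 1 (v j) else 0 := by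
  split_ifs with h
  · refine prod_congr rfl fun j _ => ?_
    cases hj : g j with
    | none => rfl
    | some i => simp [h (mem_filter.mpr ⟨mem_univ i, j, hj⟩)]
  · obtain ⟨i, hi, hiX⟩ := not_subset.mp h
    obtain ⟨j, hj⟩ := (mem_filter.mp hi).2
    exact prod_eq_zero (mem_univ j) (by simp [hj, hiX])

lemma sum_neg_one_pow_mul_ite_subset [DecidableEq κ] [CommRing R] (T : Finset κ) (c : R) :
    ∑ X : Finset κ, (-1 : R) ^ (Fintype.card κ - #X) * (if T ⊆ X then c else 0) =
      if T = univ then c else 0 := by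
  have hcompl : ∑ X ∈ univ.filter (T ⊆ ·), (-1 : R) ^ (Fintype.card κ - #X) =
      ∑ Y ∈ Tᶜ.powerset, (-1 : R) ^ #Y :=
    sum_nbij' compl compl (by simp) (by simp [subset_compl_comm])
      (fun X _ => compl_compl X) (fun Y _ => compl_compl Y) (fun X _ => by rw [card_compl])
  have halt : ∑ Y ∈ Tᶜ.powerset, (-1 : R) ^ #Y = if T = univ then 1 else 0 := by
    have := congrArg (Int.cast : ℤ → R) (sum_powerset_neg_one_pow_card (x := Tᶜ))
    push_cast at this
    simpa [compl_eq_empty_iff] using this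
  simp_rw [mul_ite, mul_zero]
  rw [← sum_filter, ← sum_mul, hcompl, halt, ite_mul, one_mul, zero_mul]

lemma prod_elim_partialInv [DecidableEq ι] [CommMonoid R] {σ : κ → ι} (hσ : Injective σ)
    (A : κ → ι → R) :
    ∏ j, (partialInv σ j).elim 1 (fun i => A i j) = ∏ i, A i (σ i) := by
  rw [← prod_fiberwise univ σ]
  refine prod_congr rfl fun j _ => ?_
  cases h : partialInv σ j with
  | none =>
    have hempty : univ.filter (σ · = j) = ∅ :=
      filter_false_of_mem fun i _ hi => by simp [(hσ.isPartialInv i j).2 hi] at h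
    rw [hempty, prod_empty, Option.elim_none]
  | some i =>
    have hsingle : univ.filter (σ · = j) = {i} := by
      ext i'
      rw [mem_filter, mem_singleton, ← hσ.isPartialInv, h, Option.some_inj, eq_comm]
      simp
    rw [hsingle, prod_singleton, Option.elim_some, (hσ.isPartialInv i j).1 h]

lemma partialDom_partialInv [DecidableEq ι] {σ : κ → ι} (hσ : Injective σ) :
    partialDom (partialInv σ) = univ.image σ := by
  ext j
  simp [partialDom, Option.isSome_iff_exists, hσ.isPartialInv _ j]

lemma partialRange_partialInv [DecidableEq κ] {σ : κ → ι} (hσ : Injective σ) :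
    partialRange (partialInv σ) = univ :=
  eq_univ_of_forall fun i => mem_filter.mpr ⟨mem_univ i, σ i, partialInv_left hσ i⟩

lemma isPartialInv_of_card_partialDom_le [DecidableEq ι] {σ : κ → ι} {g : ι → Option κ}
    (hσ : ∀ i, g (σ i) = some i) (hcard : #(partialDom g) ≤ Fintype.card κ) :
    IsPartialInv σ g := by
  have hinj : Injective σ := fun i i' h => Option.some_inj.mp ((hσ i).symm.trans (h ▸ hσ i'))
  have himage : univ.image σ = partialDom g := by
    refine eq_of_subset_of_card_le (fun j hj => ?_) ?_
    · obtain ⟨i, -, rfl⟩ := mem_image.mp hj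
      simp [partialDom, hσ]
    · rwa [card_image_of_injective _ hinj, card_univ]
  intro i j
  refine ⟨fun hj => ?_, fun h => h ▸ hσ i⟩
  have hdom : j ∈ partialDom g := by simp [partialDom, hj]
  obtain ⟨i', -, rfl⟩ := mem_image.mp (himage ▸ hdom)
  rw [Option.some_inj.mp (hj.symm.trans (hσ i'))]

lemma sum_injective_eq_sum_partialDom_partialRange [DecidableEq ι] [DecidableEq κ]
    [CommSemiring R] (A : κ → ι → R) :
    ∑ σ ∈ univ.filter (fun σ : κ → ι => Injective σ), ∏ i, A i (σ i) =
      ∑ g ∈ univ.filter (fun g : ι → Option κ =>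
          #(partialDom g) = Fintype.card κ ∧ partialRange g = univ),
        ∏ j, (g j).elim 1 (fun i => A i j) := by
  refine sum_bij (fun σ _ => partialInv σ) (fun σ hσ => ?_) (fun σ hσ τ hτ h => ?_)
    (fun g hg => ?_) (fun σ hσ => ?_)
  · rw [mem_filter] at hσ ⊢
    rw [partialDom_partialInv hσ.2, partialRange_partialInv hσ.2,
      card_image_of_injective _ hσ.2, card_univ]
    exact ⟨mem_univ _, rfl, rfl⟩
  · exact funext fun i => ((mem_filter.mp hτ).2.isPartialInv i (σ i)).1
      ((congrFun h (σ i)).symm.trans (partialInv_left (mem_filter.mp hσ).2 i)) |>.symm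
  · obtain ⟨hcard, hrange⟩ := (mem_filter.mp hg).2
    choose σ hσ using fun i => (mem_filter.mp (hrange ▸ mem_univ i : i ∈ partialRange g)).2
    have hinv := isPartialInv_of_card_partialDom_le hσ hcard.le
    exact ⟨σ, mem_filter.mpr ⟨mem_univ σ, hinv.injective⟩, hinv.eq_partialInv.symm⟩
  · exact (prod_elim_partialInv (mem_filter.mp hσ).2 A).symm

end PartialMaps

theorem transposed_ryser_general {m n : ℕ} {R : Type*} [CommRing R]
    (A : Fin m → Fin n → R) :
    (∑ σ ∈ Finset.univ.filter (fun σ : Fin m → Fin n => Function.Injective σ),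
        ∏ i, A i (σ i)) =
      ∑ X : Finset (Fin m), (-1 : R) ^ (m - X.card) *
        ∑ p ∈ Finset.univ.filter (fun p : Fin n → Fin 2 => ∑ j, (p j : ℕ) = m),
          ∏ j, (∑ i ∈ X, A i j) ^ (p j : ℕ) := by
  calc _ = ∑ g ∈ univ.filter (fun g : Fin n → Option (Fin m) =>
          #(partialDom g) = m ∧ partialRange g = univ),
        ∏ j, (g j).elim 1 (fun i => A i j) := by
        rw [sum_injective_eq_sum_partialDom_partialRange, Fintype.card_fin]
    _ = ∑ g ∈ univ.filter (fun g : Fin n → Option (Fin m) => #(partialDom g) = m),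
          ∑ X : Finset (Fin m), (-1 : R) ^ (m - #X) *
            if partialRange g ⊆ X then ∏ j, (g j).elim 1 (fun i => A i j) else 0 := by
        rw [← filter_filter, sum_filter]
        refine sum_congr rfl fun g _ => ?_
        rw [← sum_neg_one_pow_mul_ite_subset, Fintype.card_fin]
    _ = _ := by
        rw [sum_comm]
        refine sum_congr rfl fun X _ => ?_
        simp_rw [← mul_sum, ← prod_elim_ite_mem, ← sum_prod_pow_eq_sum_partialDom,
          sum_ite_mem, univ_inter]

/-- Transposed Ryser formula: the permanent equals
`∑_{X ⊆ M} (-1)^{m-|X|} ∑_p a_{X1}^{p_1} ⋯ a_{Xn}^{p_n}`, where the inner sum is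
over binary sequences `p ∈ {0,1}^n` with `∑ p_j = m`, and `a_{Xj} = ∑_{i∈X} a_{ij}`. -/
theorem transposed_ryser {m n : ℕ} {R : Type*} [CommRing R] (hmn : m ≤ n)
    (A : Fin m → Fin n → R) :
    (∑ σ ∈ Finset.univ.filter (fun σ : Fin m → Fin n => Function.Injective σ),
        ∏ i, A i (σ i)) =
      ∑ X : Finset (Fin m), (-1 : R) ^ (m - X.card) *
        ∑ p ∈ Finset.univ.filter (fun p : Fin n → Fin 2 => ∑ j, (p j : ℕ) = m),
          ∏ j, (∑ i ∈ X, A i j) ^ (p j : ℕ) :=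
  transposed_ryser_general A
end

section
/- (Disjoint summation via inclusion–exclusion, Kennes' identity) Let U be a finite set and f, g functions from subsets of U to a commutative ring R. Then Σ_{S,T ⊆ U, S ∩ T = ∅} f(S)·g(T) = Σ_{X ⊆ U} (−1)^{|X|} · (Σ_{S ⊇ X} f(S)) · (Σ_{T ⊇ X} g(T)). -/
/-!
The alternating sum `∑ X ⊆ S ∩ T, (-1) ^ #X` is the indicator of `Disjoint S T`. Inserting it
into the left-hand side and summing over `X` first turns the constraint `X ⊆ S ∩ T` into
independent constraints `X ⊆ S` and `X ⊆ T`, so the sums over `S` and `T` factor.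
-/

open Finset

theorem Finset.sum_powerset_inter_neg_one_pow_card {α R : Type*} [DecidableEq α] [Ring R]
    (S T : Finset α) :
    ∑ X ∈ (S ∩ T).powerset, (-1 : R) ^ #X = if Disjoint S T then 1 else 0 := by
  have h := congrArg (Int.cast : ℤ → R) (sum_powerset_neg_one_pow_card (x := S ∩ T))
  push_cast [apply_ite (Int.cast : ℤ → R)] at h
  simpa only [disjoint_iff_inter_eq_empty] using h

theorem Finset.sum_sum_sum_powerset_inter_comm {α M : Type*} [Fintype α] [DecidableEq α]
    [AddCommMonoid M] (F : Finset α → Finset α → Finset α → M) :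
    ∑ S, ∑ T, ∑ X ∈ (S ∩ T).powerset, F S T X =
      ∑ X, ∑ S with X ⊆ S, ∑ T with X ⊆ T, F S T X := by
  have hpowerset : ∀ S T : Finset α,
      ∑ X ∈ (S ∩ T).powerset, F S T X = ∑ X, if X ⊆ S ∧ X ⊆ T then F S T X else 0 := by
    intro S T
    rw [← sum_filter]
    congr 1
    ext X
    simp only [mem_filter, mem_univ, true_and, mem_powerset, subset_inter_iff]
  simp_rw [hpowerset, sum_filter, ite_sum_zero, ← ite_and]
  exact (sum_congr rfl fun _ _ => sum_comm).trans sum_comm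

/-- Kennes' identity: disjoint summation via inclusion–exclusion. -/
theorem disjoint_sum_inclusion_exclusion {U : Type*} [Fintype U] [DecidableEq U]
    {R : Type*} [CommRing R] (f g : Finset U → R) :
    (∑ S : Finset U, ∑ T ∈ Finset.univ.filter (fun T : Finset U => Disjoint S T),
        f S * g T) =
      ∑ X : Finset U, (-1 : R) ^ X.card *
        (∑ S ∈ Finset.univ.filter (fun S : Finset U => X ⊆ S), f S) *
        (∑ T ∈ Finset.univ.filter (fun T : Finset U => X ⊆ T), g T) := by
  calc
    _ = ∑ S, ∑ T, ∑ X ∈ (S ∩ T).powerset, (-1 : R) ^ #X * (f S * g T) := by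
      simp_rw [sum_filter, ← sum_mul, sum_powerset_inter_neg_one_pow_card, ite_mul, one_mul,
        zero_mul]
    _ = ∑ X, ∑ S with X ⊆ S, ∑ T with X ⊆ T, (-1 : R) ^ #X * (f S * g T) :=
      sum_sum_sum_powerset_inter_comm _
    _ = _ := by
      simp_rw [mul_assoc, sum_mul_sum, mul_sum]
end

section
/- Over a commutative ring, for a square n×n matrix A, the rectangular Ryser formula specializes to the classical Ryser formula: per A = (−1)^n Σ_{X ⊆ {1,...,n}} (−1)^{|X|} Π_{i=1}^n (Σ_{j ∈ X} a_{ij}). -/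
/-!
A permutation of a finite set is the same as a surjective self-map, so the permanent is the sum of
`∏ i, A i (f i)` over surjective `f`. By inclusion–exclusion over the set `t` of values that `f`
misses, this is `∑ t, (-1) ^ #t * ∏ i, ∑ j ∈ tᶜ, A i j`; substituting `X = tᶜ` turns the sign
`(-1) ^ (n - #X)` into `(-1) ^ n * (-1) ^ #X`.
-/

open Finset Fintype Function

theorem Equiv.Perm.sum_eq_sum_surjective {α M : Type*} [Fintype α] [DecidableEq α]
    [AddCommMonoid M] (g : (α → α) → M) :
    ∑ σ : Equiv.Perm α, g σ = ∑ f : α → α with Surjective f, g f := by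
  rw [sum_subtype _ fun _ ↦ mem_filter_univ _]
  exact Fintype.sum_equiv (Equiv.bijectiveEquiv.symm.trans
    (Equiv.subtypeEquivRight fun _ ↦ Finite.surjective_iff_bijective.symm)) _ _ fun _ ↦ rfl

namespace Finset

variable {ι α R : Type*} [Fintype ι] [DecidableEq ι] [Fintype α] [DecidableEq α] [CommRing R]

lemma inf_piFinset_compl_singleton (t : Finset α) :
    t.inf (fun j ↦ piFinset fun _ : ι ↦ ({j}ᶜ : Finset α)) = piFinset fun _ ↦ tᶜ := by
  ext f
  simp only [mem_inf, mem_piFinset, mem_compl, mem_singleton]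
  grind

lemma filter_surjective_eq_inf_compl :
    ({f : ι → α | Surjective f} : Finset (ι → α)) =
      univ.inf fun j ↦ (piFinset fun _ : ι ↦ ({j}ᶜ : Finset α))ᶜ := by
  ext f
  simp only [mem_filter_univ, mem_inf, mem_univ, forall_const, mem_compl, mem_piFinset,
    mem_singleton, not_forall, not_not]
  rfl

theorem sum_surjective_prod_eq_alternating_sum (A : ι → α → R) :
    ∑ f : ι → α with Surjective f, ∏ i, A i (f i) =
      ∑ t : Finset α, (-1) ^ #t * ∏ i, ∑ j ∈ tᶜ, A i j := by
  rw [filter_surjective_eq_inf_compl, inclusion_exclusion_sum_inf_compl, powerset_univ]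
  simp only [inf_piFinset_compl_singleton, sum_prod_piFinset, zsmul_eq_mul]
  push_cast
  rfl

theorem sum_neg_one_pow_card_mul_compl (F : Finset α → R) :
    ∑ t : Finset α, (-1) ^ #t * F tᶜ =
      (-1) ^ Fintype.card α * ∑ X : Finset α, (-1) ^ #X * F X := by
  rw [← compl_involutive.bijective.sum_comp, mul_sum]
  refine sum_congr rfl fun X _ ↦ ?_
  have hsq : (-1 : R) ^ #X * (-1) ^ #X = 1 := by rw [← mul_pow]; simp
  rw [compl_compl, card_compl, ← pow_sub_mul_pow (-1 : R) (card_le_univ X)]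
  linear_combination (-((-1 : R) ^ (Fintype.card α - #X) * F X)) * hsq

end Finset

/-- Classical Ryser formula for a square matrix over a commutative ring. -/
theorem ryser_square {n : ℕ} {R : Type*} [CommRing R] (A : Fin n → Fin n → R) :
    (∑ σ : Equiv.Perm (Fin n), ∏ i, A i (σ i)) =
      (-1 : R) ^ n *
        ∑ X : Finset (Fin n), (-1 : R) ^ X.card * ∏ i, ∑ j ∈ X, A i j := by
  rw [Equiv.Perm.sum_eq_sum_surjective fun f ↦ ∏ i, A i (f i),
    sum_surjective_prod_eq_alternating_sum,
    sum_neg_one_pow_card_mul_compl fun X ↦ ∏ i, ∑ j ∈ X, A i j, Fintype.card_fin]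
end

section
/- Let A = (a_{ij}) be an m×n matrix over a commutative ring with m ≤ n. Then the coefficient of the monomial a_{i_1 j_1} a_{i_2 j_2} ⋯ a_{i_m j_m} in the expansion Σ_{X ⊆ {1,...,m}} (−1)^{m−|X|} Σ_{p ∈ {0,1}^n, Σp_k = m} Π_{k: p_k = 1} (Σ_{i ∈ X} a_{ik}) is 1 if the multiset {(i_1,j_1),...,(i_m,j_m)} has all i's distinct and all j's distinct, and 0 if the j's are distinct but some i repeats. -/
open Finset

lemma prod_monomial_one {σ α : Type*} [DecidableEq α] (s : Finset α) (f : α → (σ →₀ ℕ)) :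
    ∏ a ∈ s, MvPolynomial.monomial (f a) (1:ℤ) = MvPolynomial.monomial (∑ a ∈ s, f a) 1 := by
  induction s using Finset.induction with
  | empty => simp
  | insert _ _ h ih =>
      rw [Finset.prod_insert h, Finset.sum_insert h, ih, MvPolynomial.monomial_mul, mul_one]

lemma sum_single_apply {β : Type*} [DecidableEq β] (B : Finset β) (x : β) :
    (∑ b ∈ B, Finsupp.single b (1:ℕ)) x = if x ∈ B then 1 else 0 := by
  rw [Finset.sum_apply']
  simp [Finsupp.single_apply]

lemma sum_single_one_eq_iff {β : Type*} [DecidableEq β] (B C : Finset β) :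
    (∑ b ∈ B, Finsupp.single b (1:ℕ)) = ∑ c ∈ C, Finsupp.single c 1 ↔ B = C := by
  constructor
  · intro h
    ext x
    have := congrArg (fun f => f x) h
    simp only [sum_single_apply] at this
    by_cases hB : x ∈ B <;> by_cases hC : x ∈ C <;> simp [hB, hC] at this ⊢
  · rintro rfl; rfl

section
variable {m n : ℕ} (i : Fin m → Fin m) (j : Fin m → Fin n)

lemma coeff_prod_linear (hj : Function.Injective j) (X : Finset (Fin m)) (T : Finset (Fin n)) :
    MvPolynomial.coeff (∑ t, Finsupp.single (i t, j t) 1)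
      (∏ k ∈ T, ∑ i' ∈ X, MvPolynomial.X (i', k) : MvPolynomial (Fin m × Fin n) ℤ) =
    if T = univ.image j ∧ ∀ t, i t ∈ X then 1 else 0 := by
  classical
  have hXmono : ∀ (v : Fin m × Fin n),
      (MvPolynomial.X v : MvPolynomial (Fin m × Fin n) ℤ) =
        MvPolynomial.monomial (Finsupp.single v 1) 1 := fun v => rfl
  rw [Finset.prod_sum, MvPolynomial.coeff_sum]
  -- rewrite each product as a monomial
  have hterm : ∀ g ∈ T.pi (fun _ => X),
      (∏ x ∈ T.attach, MvPolynomial.X ((g x.1 x.2 : Fin m), (x.1 : Fin n))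
         : MvPolynomial (Fin m × Fin n) ℤ) =
      MvPolynomial.monomial (∑ x ∈ T.attach, Finsupp.single ((g x.1 x.2 : Fin m), (x.1 : Fin n)) 1) 1 := by
    intro g _
    simp only [hXmono]
    exact prod_monomial_one _ _
  calc (∑ g ∈ T.pi (fun _ => X), MvPolynomial.coeff (∑ t, Finsupp.single (i t, j t) 1)
          (∏ x ∈ T.attach, MvPolynomial.X ((g x.1 x.2 : Fin m), (x.1 : Fin n))))
      = ∑ g ∈ T.pi (fun _ => X),
          (if (∑ x ∈ T.attach, Finsupp.single ((g x.1 x.2 : Fin m), (x.1 : Fin n)) 1)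
              = (∑ t, Finsupp.single (i t, j t) 1) then (1:ℤ) else 0) := by
        refine Finset.sum_congr rfl fun g hg => ?_
        rw [hterm g hg, MvPolynomial.coeff_monomial]
    _ = if T = univ.image j ∧ ∀ t, i t ∈ X then 1 else 0 := ?_
  -- characterize the condition via images
  have hinj1 : ∀ (g : ∀ a ∈ T, Fin m), ∀ x ∈ T.attach, ∀ y ∈ T.attach,
      ((g x.1 x.2 : Fin m), (x.1 : Fin n)) = ((g y.1 y.2 : Fin m), (y.1 : Fin n)) → x = y := by
    intro g x _ y _ h
    exact Subtype.ext (congrArg Prod.snd h)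
  have hinj2 : ∀ x ∈ (univ : Finset (Fin m)), ∀ y ∈ univ,
      ((i x, j x) : Fin m × Fin n) = (i y, j y) → x = y := by
    intro x _ y _ h
    exact hj (congrArg Prod.snd h)
  have him : ∀ g : (∀ a ∈ T, Fin m),
      ((∑ x ∈ T.attach, Finsupp.single ((g x.1 x.2 : Fin m), (x.1 : Fin n)) 1)
          = (∑ t, Finsupp.single (i t, j t) 1))
      ↔ T.attach.image (fun x => ((g x.1 x.2 : Fin m), (x.1 : Fin n)))
          = univ.image (fun t => (i t, j t)) := by
    intro g
    have e1 : (∑ x ∈ T.attach, Finsupp.single ((g x.1 x.2 : Fin m), (x.1 : Fin n)) (1:ℕ))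
        = ∑ v ∈ T.attach.image (fun x => ((g x.1 x.2 : Fin m), (x.1 : Fin n))),
            Finsupp.single v 1 := (Finset.sum_image (f := fun v => Finsupp.single v (1:ℕ)) (hinj1 g)).symm
    have e2 : (∑ t, Finsupp.single ((i t, j t) : Fin m × Fin n) (1:ℕ))
        = ∑ v ∈ univ.image (fun t => ((i t, j t) : Fin m × Fin n)),
            Finsupp.single v 1 := (Finset.sum_image (f := fun v => Finsupp.single v (1:ℕ)) hinj2).symm
    rw [e1, e2]
    exact sum_single_one_eq_iff _ _
  have hfacts : ∀ g ∈ T.pi (fun _ => X),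
      T.attach.image (fun x => ((g x.1 x.2 : Fin m), (x.1 : Fin n)))
          = univ.image (fun t => ((i t, j t) : Fin m × Fin n)) →
      T = univ.image j ∧ (∀ t, ∀ hk : j t ∈ T, g (j t) hk = i t) ∧ (∀ t, i t ∈ X) := by
    intro g hg h
    have hT : T = univ.image j := by
      have h2 := congrArg (Finset.image Prod.snd) h
      rw [Finset.image_image, Finset.image_image] at h2
      simpa [Function.comp_def] using h2
    have hval : ∀ t, ∀ hk : j t ∈ T, g (j t) hk = i t := by
      intro t hk
      have hmem : ((i t, j t) : Fin m × Fin n)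
          ∈ T.attach.image (fun x => ((g x.1 x.2 : Fin m), (x.1 : Fin n))) := by
        rw [h]
        exact Finset.mem_image_of_mem _ (Finset.mem_univ t)
      obtain ⟨⟨k, hkT⟩, -, hx⟩ := Finset.mem_image.mp hmem
      have hk2 : k = j t := congrArg Prod.snd hx
      subst hk2
      exact congrArg Prod.fst hx
    refine ⟨hT, hval, fun t => ?_⟩
    have hjT : j t ∈ T := by rw [hT]; exact Finset.mem_image_of_mem _ (Finset.mem_univ t)
    have := Finset.mem_pi.mp hg (j t) hjT
    rwa [hval t hjT] at this
  by_cases hcond : T = univ.image j ∧ ∀ t, i t ∈ X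
  · rw [if_pos hcond]
    obtain ⟨hT, hiX⟩ := hcond
    subst hT
    set g₀ : ∀ k ∈ univ.image j, Fin m :=
      fun k hk => i (Finset.mem_image.mp hk).choose with hg₀def
    have hg0 : ∀ t (hk : j t ∈ univ.image j), g₀ (j t) hk = i t := by
      intro t hk
      exact congrArg i (hj (Finset.mem_image.mp hk).choose_spec.2)
    have hmem : g₀ ∈ (univ.image j).pi (fun _ => X) :=
      Finset.mem_pi.mpr fun k hk => hiX _
    rw [Finset.sum_eq_single_of_mem g₀ hmem ?_]
    · rw [if_pos]
      apply (him g₀).mpr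
      apply (Finset.eq_of_subset_of_card_le ?_ ?_).symm
      · intro v hv
        obtain ⟨t, -, rfl⟩ := Finset.mem_image.mp hv
        have hjt : j t ∈ univ.image j := Finset.mem_image_of_mem _ (Finset.mem_univ t)
        refine Finset.mem_image.mpr ⟨⟨j t, hjt⟩, Finset.mem_attach _ _, ?_⟩
        rw [hg0 t hjt]
      · calc #((univ.image j).attach.image
              (fun x => ((g₀ x.1 x.2 : Fin m), (x.1 : Fin n))))
            ≤ #((univ.image j).attach) := Finset.card_image_le
          _ = #(univ.image j) := Finset.card_attach
          _ = m := by rw [Finset.card_image_of_injective _ hj, Finset.card_univ, Fintype.card_fin]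
          _ = #(univ.image (fun t => ((i t, j t) : Fin m × Fin n))) := by
              rw [Finset.card_image_of_injOn hinj2, Finset.card_univ, Fintype.card_fin]
    · intro g hg hne
      rw [if_neg]
      intro hD
      apply hne
      have h3 := hfacts g hg ((him g).mp hD)
      funext k hk
      obtain ⟨t, -, rfl⟩ := Finset.mem_image.mp hk
      rw [h3.2.1 t hk, hg0 t hk]
  · rw [if_neg hcond]
    apply Finset.sum_eq_zero
    intro g hg
    rw [if_neg]
    intro hD
    have h3 := hfacts g hg ((him g).mp hD)
    exact hcond ⟨h3.1, h3.2.2⟩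

lemma key_sum (hj : Function.Injective j) (X : Finset (Fin m)) :
    (∑ p ∈ Finset.univ.filter (fun p : Fin n → Fin 2 => ∑ k, (p k : ℕ) = m),
        MvPolynomial.coeff (∑ t, Finsupp.single (i t, j t) 1)
          (∏ k ∈ Finset.univ.filter (fun k : Fin n => (p k : ℕ) = 1),
              ∑ i' ∈ X, MvPolynomial.X (i', k) : MvPolynomial (Fin m × Fin n) ℤ)) =
    if ∀ t, i t ∈ X then 1 else 0 := by
  classical
  have hrw := fun (p : Fin n → Fin 2) => coeff_prod_linear i j hj X (univ.filter (fun k : Fin n => (p k : ℕ) = 1))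
  rw [Finset.sum_congr rfl (fun p _ => hrw p)]
  set p₀ : Fin n → Fin 2 := fun k => if k ∈ univ.image j then 1 else 0 with hp₀
  have hp₀val : ∀ k, (p₀ k : ℕ) = if k ∈ univ.image j then 1 else 0 := by
    intro k
    simp only [hp₀]
    by_cases hk : k ∈ univ.image j
    · rw [if_pos hk, if_pos hk]; rfl
    · rw [if_neg hk, if_neg hk]; rfl
  have hTp₀ : univ.filter (fun k => ((p₀ k : ℕ) = 1)) = univ.image j := by
    ext k
    simp only [Finset.mem_filter, Finset.mem_univ, true_and, hp₀val k]
    by_cases hk : k ∈ univ.image j <;> simp [hk]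
  have hmem : p₀ ∈ univ.filter (fun p : Fin n → Fin 2 => ∑ k, (p k : ℕ) = m) := by
    rw [Finset.mem_filter]
    refine ⟨Finset.mem_univ _, ?_⟩
    rw [Finset.sum_congr rfl (fun k _ => hp₀val k), Finset.sum_ite_mem,
      Finset.univ_inter, Finset.sum_const, smul_eq_mul, mul_one,
      Finset.card_image_of_injective _ hj, Finset.card_univ, Fintype.card_fin]
  rw [Finset.sum_eq_single_of_mem p₀ hmem ?_]
  · rw [hTp₀]
    simp
  · intro p hp hne
    rw [if_neg]
    rintro ⟨hT, -⟩
    apply hne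
    funext k
    have : (p k : ℕ) = 1 ↔ k ∈ univ.image j := by
      rw [← hT, Finset.mem_filter]
      simp
    by_cases hk : k ∈ univ.image j
    · have h1 : (p k : ℕ) = 1 := this.mpr hk
      have h2 : p₀ k = 1 := by simp only [hp₀]; exact if_pos hk
      rw [h2]
      exact Fin.ext h1
    · have h1 : (p k : ℕ) ≠ 1 := fun h => hk (this.mp h)
      have h2 : p₀ k = 0 := by simp only [hp₀]; exact if_neg hk
      rw [h2]
      have := (p k).isLt
      apply Fin.ext
      simp only [Fin.val_zero]
      omega

lemma alt_sum (i : Fin m → Fin m) :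
    (∑ X : Finset (Fin m), (-1:ℤ)^(m - #X) * (if ∀ t, i t ∈ X then 1 else 0)) =
    if Function.Injective i then 1 else 0 := by
  classical
  have h1 : ∀ X : Finset (Fin m),
      (-1:ℤ)^(m - #X) * (if ∀ t, i t ∈ X then 1 else 0) =
      if univ.image i ⊆ X then (-1:ℤ)^(m - #X) else 0 := by
    intro X
    rw [mul_ite, mul_one, mul_zero]
    refine if_congr ?_ rfl rfl
    rw [Finset.image_subset_iff]
    simp
  rw [Finset.sum_congr rfl (fun X _ => h1 X), ← Finset.sum_filter]
  have h2 : (∑ X ∈ univ.filter (fun X => univ.image i ⊆ X), (-1:ℤ)^(m - #X)) =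
      ∑ Y ∈ (univ.image i)ᶜ.powerset, (-1:ℤ)^(#Y) := by
    refine Finset.sum_nbij' (fun X => Xᶜ) (fun Y => Yᶜ) ?_ ?_ ?_ ?_ ?_
    · intro X hX
      rw [Finset.mem_powerset]
      exact Finset.compl_subset_compl.mpr ((Finset.mem_filter.mp hX).2)
    · intro Y hY
      rw [Finset.mem_filter]
      refine ⟨Finset.mem_univ _, ?_⟩
      have := Finset.mem_powerset.mp hY
      rwa [← Finset.compl_subset_compl, compl_compl] at this
    · intro X _; exact compl_compl X
    · intro Y _; exact compl_compl Y
    · intro X _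
      congr 1
      rw [Finset.card_compl, Fintype.card_fin]
  rw [h2, Finset.sum_powerset_neg_one_pow_card]
  simp only [Finset.compl_eq_empty_iff]
  refine if_congr ?_ rfl rfl
  rw [Finite.injective_iff_surjective]
  constructor
  · intro h y
    have : y ∈ univ.image i := by rw [h]; exact Finset.mem_univ y
    obtain ⟨x, -, hx⟩ := Finset.mem_image.mp this
    exact ⟨x, hx⟩
  · intro h
    apply Finset.eq_univ_of_forall
    intro y
    obtain ⟨x, hx⟩ := h y
    exact Finset.mem_image.mpr ⟨x, Finset.mem_univ x, hx⟩

end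

/-- Treat the entries `a_{ik}` as commuting indeterminates. In the expansion
`∑_{X ⊆ M} (-1)^{m-|X|} ∑_{p ∈ {0,1}^n, ∑ p_k = m} ∏_{k : p_k = 1} (∑_{i∈X} a_{ik})`,
the coefficient of the monomial `a_{i₁j₁} ⋯ a_{iₘjₘ}` (with distinct column
indices `j₁, …, jₘ`) is `1` if the rows `i₁, …, iₘ` are pairwise distinct and `0`
otherwise. -/
theorem transposed_ryser_coefficient {m n : ℕ} (hmn : m ≤ n)
    (i : Fin m → Fin m) (j : Fin m → Fin n) (hj : Function.Injective j) :
    MvPolynomial.coeff (∑ t, Finsupp.single (i t, j t) 1)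
        (∑ X : Finset (Fin m),
          (-1 : MvPolynomial (Fin m × Fin n) ℤ) ^ (m - X.card) *
            ∑ p ∈ Finset.univ.filter (fun p : Fin n → Fin 2 => ∑ k, (p k : ℕ) = m),
              ∏ k ∈ Finset.univ.filter (fun k : Fin n => (p k : ℕ) = 1),
                ∑ i' ∈ X, MvPolynomial.X (i', k)) =
      if Function.Injective i then 1 else 0 := by
  classical
  rw [MvPolynomial.coeff_sum]
  have h1 : ∀ X : Finset (Fin m),
      MvPolynomial.coeff (∑ t, Finsupp.single (i t, j t) 1)
        ((-1 : MvPolynomial (Fin m × Fin n) ℤ) ^ (m - X.card) *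
          ∑ p ∈ Finset.univ.filter (fun p : Fin n → Fin 2 => ∑ k, (p k : ℕ) = m),
            ∏ k ∈ Finset.univ.filter (fun k : Fin n => (p k : ℕ) = 1),
              ∑ i' ∈ X, MvPolynomial.X (i', k)) =
      (-1:ℤ)^(m - #X) * (if ∀ t, i t ∈ X then 1 else 0) := by
    intro X
    rw [show ((-1 : MvPolynomial (Fin m × Fin n) ℤ)^(m - X.card))
        = MvPolynomial.C ((-1:ℤ)^(m - X.card)) by rw [map_pow, map_neg, map_one],
      MvPolynomial.coeff_C_mul, MvPolynomial.coeff_sum]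
    exact congrArg (fun z => (-1:ℤ)^(m - #X) * z) (key_sum i j hj X)
  rw [Finset.sum_congr rfl (fun X _ => h1 X)]
  exact alt_sum i
end

section
/- Let U be a finite set. For functions f, g from subsets of U to a commutative ring, define the 'disjoint product' d = Σ_{S ∩ T = ∅} f(S)g(T). If f is supported on sets of size exactly k and g on sets of size exactly l with k + l ≤ |U|, then d = Σ_{X ⊆ U, |X| ≤ min(k,l)} (−1)^{|X|} (Σ_{S ⊇ X} f(S))(Σ_{T ⊇ X} g(T)). -/
/-!
Expanding the product on the right, the pair `(S, T)` receives the coefficient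
`∑_{X ⊆ S ∩ T} (-1)^|X|`, which is `1` if `S ∩ T = ∅` and `0` otherwise. When `f` lives on
`k`-sets, the sum of `f` over supersets of `X` vanishes as soon as `|X| > k`, and likewise for `g`,
so only the terms with `|X| ≤ min k l` survive.
-/

open Finset

namespace Finset

variable {α R : Type*} [DecidableEq α]

theorem sum_powerset_inter_neg_one_pow_card_s17 [Ring R] (S T : Finset α) :
    ∑ X ∈ (S ∩ T).powerset, (-1 : R) ^ X.card = if Disjoint S T then 1 else 0 := by
  have h := congrArg (Int.cast : ℤ → R) (sum_powerset_neg_one_pow_card (x := S ∩ T))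
  push_cast at h
  simp only [h, disjoint_iff_inter_eq_empty]

variable [Fintype α]

theorem sum_disjoint_mul_eq_sum_neg_one_pow_mul [Ring R] (f g : Finset α → R) :
    ∑ S, ∑ T ∈ univ.filter (fun T => Disjoint S T), f S * g T =
      ∑ X, (-1 : R) ^ X.card * (∑ S ∈ univ.filter (fun S => X ⊆ S), f S) *
        (∑ T ∈ univ.filter (fun T => X ⊆ T), g T) := by
  calc ∑ S, ∑ T ∈ univ.filter (fun T => Disjoint S T), f S * g T
      = ∑ S, ∑ T, (∑ X ∈ (S ∩ T).powerset, (-1 : R) ^ X.card) * (f S * g T) := by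
        simp only [sum_filter, sum_powerset_inter_neg_one_pow_card_s17, ite_mul, one_mul, zero_mul]
    _ = ∑ S, ∑ T, ∑ X, if X ⊆ S ∧ X ⊆ T then (-1 : R) ^ X.card * (f S * g T) else 0 := by
        simp only [← subset_inter_iff, ← sum_filter, filter_subset_univ, sum_mul]
    _ = ∑ X, ∑ S, ∑ T, if X ⊆ S ∧ X ⊆ T then (-1 : R) ^ X.card * (f S * g T) else 0 :=
        (sum_congr rfl fun _ _ => sum_comm).trans sum_comm
    _ = ∑ X, (-1 : R) ^ X.card * (∑ S ∈ univ.filter (fun S => X ⊆ S), f S) *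
          (∑ T ∈ univ.filter (fun T => X ⊆ T), g T) := by
        refine sum_congr rfl fun X _ => ?_
        rw [mul_assoc, sum_mul_sum, mul_sum]
        simp only [mul_sum, ite_and, sum_filter]
        refine sum_congr rfl fun S _ => ?_
        by_cases hS : X ⊆ S <;> simp [hS, mul_ite]

theorem sum_superset_eq_zero_of_card_lt [AddCommMonoid R] {f : Finset α → R} {k : ℕ}
    (hf : ∀ S : Finset α, S.card ≠ k → f S = 0) {X : Finset α} (hX : k < X.card) :
    ∑ S ∈ univ.filter (fun S => X ⊆ S), f S = 0 :=
  sum_eq_zero fun S hS => hf S (card_le_card (mem_filter.mp hS).2 |>.trans_lt' hX).ne'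

end Finset

theorem disjoint_sum_graded_general {U : Type*} [Fintype U] [DecidableEq U]
    {R : Type*} [CommRing R] (f g : Finset U → R) (k l : ℕ)
    (hf : ∀ S : Finset U, S.card ≠ k → f S = 0)
    (hg : ∀ T : Finset U, T.card ≠ l → g T = 0) :
    (∑ S : Finset U, ∑ T ∈ Finset.univ.filter (fun T : Finset U => Disjoint S T),
        f S * g T) =
      ∑ X ∈ (Finset.univ : Finset U).powerset.filter (fun X => X.card ≤ min k l),
        (-1 : R) ^ X.card *
          (∑ S ∈ Finset.univ.filter (fun S : Finset U => X ⊆ S), f S) *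
          (∑ T ∈ Finset.univ.filter (fun T : Finset U => X ⊆ T), g T) := by
  rw [powerset_univ, sum_disjoint_mul_eq_sum_neg_one_pow_mul, sum_filter_of_ne]
  intro X _ hX
  by_contra! hlt
  rcases min_lt_iff.mp hlt with hk | hl
  · exact hX (by rw [sum_superset_eq_zero_of_card_lt hf hk, mul_zero, zero_mul])
  · exact hX (by rw [sum_superset_eq_zero_of_card_lt hg hl, mul_zero])

/-- If `f` is supported on sets of size exactly `k` and `g` on sets of size
exactly `l` with `k + l ≤ |U|`, the disjoint-pair sum can be computed with the
outer sum restricted to `|X| ≤ min k l`. -/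
theorem disjoint_sum_graded {U : Type*} [Fintype U] [DecidableEq U]
    {R : Type*} [CommRing R] (f g : Finset U → R) (k l : ℕ)
    (hkl : k + l ≤ Fintype.card U)
    (hf : ∀ S : Finset U, S.card ≠ k → f S = 0)
    (hg : ∀ T : Finset U, T.card ≠ l → g T = 0) :
    (∑ S : Finset U, ∑ T ∈ Finset.univ.filter (fun T : Finset U => Disjoint S T),
        f S * g T) =
      ∑ X ∈ (Finset.univ : Finset U).powerset.filter (fun X => X.card ≤ min k l),
        (-1 : R) ^ X.card *
          (∑ S ∈ Finset.univ.filter (fun S : Finset U => X ⊆ S), f S) *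
          (∑ T ∈ Finset.univ.filter (fun T : Finset U => X ⊆ T), g T) :=
  disjoint_sum_graded_general f g k l hf hg
end
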